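/- Let j : ℝ⁴ → ℝ⁴ be the orthogonal complex structure j(x,y,z,w) = (−z, w, x, −y), and let f : ℝ⁴ → ℝ⁴ be f(x,y,z,w) = j(x,y,z,w) + (x² − y², −2xy, 0, 0) = (−z + x² − y², w − 2xy, x, −y). Then p = (x,y,z,w) is a J₀-complex point of the graph Γ_f (i.e. Df(p) ∘ Df(p) = −id) if and only if x = 0 and y = 0. Hence the set of J₀-complex points of Γ_f is the 2-plane {(0, 0, z, w) : z, w ∈ ℝ}. -/

import Mathlib

/-!
The Jacobian of `f` at `(x, y, z, w)` is the matrix of `j` plus the Jacobian of the quadratic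
part, which only involves `x` and `y`. The `(0, 0)` entry of its square is `4(x² + y²) − 1`, so
`Df(p)² = −id` forces `x = y = 0`; conversely, at such points `Df(p)` is `j` itself and `j² = −id`.
-/

open scoped RealInnerProductSpace

noncomputable section

abbrev E4 : Type := EuclideanSpace ℝ (Fin 4)

noncomputable def mk4 (a b c d : ℝ) : E4 := (WithLp.equiv 2 (Fin 4 → ℝ)).symm ![a, b, c, d]

/-- `f(x,y,z,w) = (−z + x² − y², w − 2xy, x, −y)` -/
noncomputable def f13 : E4 → E4 := fun p =>
  mk4 (-(p 2) + (p 0) ^ 2 - (p 1) ^ 2) (p 3 - 2 * p 0 * p 1) (p 0) (-(p 1))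

open Matrix

def jacobian13 (x y : ℝ) : Matrix (Fin 4) (Fin 4) ℝ :=
  !![2 * x, -2 * y, -1, 0;
     -2 * y, -2 * x, 0, 1;
     1, 0, 0, 0;
     0, -1, 0, 0]

theorem hasStrictFDerivAt_f13 (p : E4) :
    HasStrictFDerivAt f13 (toEuclideanCLM (𝕜 := ℝ) (jacobian13 (p 0) (p 1))) p := by
  have hc (k : Fin 4) :
      HasStrictFDerivAt (fun q : E4 => q k) (EuclideanSpace.proj k : E4 →L[ℝ] ℝ) p :=
    (EuclideanSpace.proj k : E4 →L[ℝ] ℝ).hasStrictFDerivAt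
  rw [hasStrictFDerivAt_euclidean]
  simp only [Fin.forall_fin_succ, IsEmpty.forall_iff, and_true, f13, mk4, mul_assoc,
    WithLp.equiv_symm_apply, PiLp.toLp_apply, cons_val_zero, cons_val_succ]
  refine ⟨(((hc 2).neg.add ((hc 0).pow 2)).sub ((hc 1).pow 2)).congr_fderiv ?_,
    ((hc 3).sub (((hc 0).mul (hc 1)).const_mul 2)).congr_fderiv ?_,
    (hc 0).congr_fderiv ?_, (hc 1).neg.congr_fderiv ?_⟩
  all_goals
    ext v
    simp only [ContinuousLinearMap.comp_apply, PiLp.proj_apply, ofLp_toEuclideanCLM, mulVec,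
      dotProduct, Fin.sum_univ_four, jacobian13, of_apply, cons_val, cons_val_zero, cons_val_one,
      cons_val_succ, _root_.sub_apply, _root_.add_apply, _root_.neg_apply, _root_.smul_apply,
      smul_eq_mul, smul_add, nsmul_eq_mul]
    ring

theorem jacobian13_mul_self_apply_zero_zero (x y : ℝ) :
    (jacobian13 x y * jacobian13 x y) 0 0 = 4 * (x ^ 2 + y ^ 2) - 1 := by
  simp only [jacobian13, mul_apply, Fin.sum_univ_four, of_apply, cons_val, cons_val_zero,
    cons_val_one]
  ring

theorem jacobian13_mul_self_eq_neg_one_iff (x y : ℝ) :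
    jacobian13 x y * jacobian13 x y = -1 ↔ x = 0 ∧ y = 0 := by
  constructor
  · intro h
    have hsum : x ^ 2 + y ^ 2 = 0 := by
      have h00 := jacobian13_mul_self_apply_zero_zero x y
      rw [h, neg_apply, one_apply_eq] at h00
      linarith
    obtain ⟨hx, hy⟩ := (add_eq_zero_iff_of_nonneg (sq_nonneg x) (sq_nonneg y)).1 hsum
    exact ⟨pow_eq_zero_iff two_ne_zero |>.1 hx, pow_eq_zero_iff two_ne_zero |>.1 hy⟩
  · rintro ⟨rfl, rfl⟩
    ext i j
    fin_cases i <;> fin_cases j <;> simp [jacobian13, mul_apply, Fin.sum_univ_four]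

theorem exists_eq_mk4_zero_zero_iff (p : E4) :
    (∃ z w : ℝ, p = mk4 0 0 z w) ↔ p 0 = 0 ∧ p 1 = 0 := by
  constructor
  · rintro ⟨z, w, rfl⟩
    simp [mk4]
  · rintro ⟨h0, h1⟩
    refine ⟨p 2, p 3, ?_⟩
    ext i
    fin_cases i <;> simp [mk4, h0, h1]

theorem stmt_13 :
    (∀ p : E4, fderiv ℝ f13 p * fderiv ℝ f13 p = -1 ↔ (p 0 = 0 ∧ p 1 = 0)) ∧
    {p : E4 | fderiv ℝ f13 p * fderiv ℝ f13 p = -1} =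
      {p : E4 | ∃ z w : ℝ, p = mk4 0 0 z w} := by
  have h_complex (p : E4) : fderiv ℝ f13 p * fderiv ℝ f13 p = -1 ↔ (p 0 = 0 ∧ p 1 = 0) := by
    rw [(hasStrictFDerivAt_f13 p).hasFDerivAt.fderiv, ← map_mul,
      ← map_one (toEuclideanCLM (𝕜 := ℝ) (n := Fin 4)), ← map_neg, EmbeddingLike.apply_eq_iff_eq,
      jacobian13_mul_self_eq_neg_one_iff]
  exact ⟨h_complex, Set.ext fun p => (h_complex p).trans (exists_eq_mk4_zero_zero_iff p).symm⟩

end
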